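/- arXiv:1001.2124 — 5 statements merged into one kernel-verified Lean document; each statement's English description precedes it below -/
import Mathlib

section
/- Let α > 0 and let S = {z ∈ ℂ : |Re z| < π/(2α)} be the vertical strip. If f is holomorphic on S with |f(z)| < 1 for all z ∈ S and f(0) = 0, then for every real number y one has |f(iy)| ≤ tanh(α|y|/2). -/
noncomputable section

/-- A real-valued function is harmonic on `Ω`: twice continuously differentiable
with vanishing Laplacian. -/
def HarmonicOnReal (u : ℂ → ℝ) (Ω : Set ℂ) : Prop :=
  ContDiffOn ℝ 2 u Ω ∧ ∀ z ∈ Ω,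
    fderiv ℝ (fun w => fderiv ℝ u w 1) z 1 +
    fderiv ℝ (fun w => fderiv ℝ u w Complex.I) z Complex.I = 0

/-- A complex-valued map is harmonic on `Ω` if its real and imaginary parts are. -/
def HarmonicMapOn (h : ℂ → ℂ) (Ω : Set ℂ) : Prop :=
  HarmonicOnReal (fun z => (h z).re) Ω ∧ HarmonicOnReal (fun z => (h z).im) Ω

/-- `h` is a harmonic homeomorphism from `Ω` onto `Ω'`. -/
def IsHarmonicHomeoOn (h : ℂ → ℂ) (Ω Ω' : Set ℂ) : Prop :=
  HarmonicMapOn h Ω ∧ ContinuousOn h Ω ∧ Set.BijOn h Ω Ω' ∧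
  ∃ g : ℂ → ℂ, ContinuousOn g Ω' ∧ (∀ z ∈ Ω, g (h z) = z) ∧ (∀ w ∈ Ω', h (g w) = w)

def Annulus (r R : ℝ) : Set ℂ := {z | r < ‖z‖ ∧ ‖z‖ < R}

/-- Wirtinger derivative `∂h/∂z = (h_x - i h_y)/2`. -/
def wirtingerZ (h : ℂ → ℂ) (z : ℂ) : ℂ :=
  (fderiv ℝ h z 1 - Complex.I * fderiv ℝ h z Complex.I) / 2

/-- Wirtinger derivative `∂h/∂z̄ = (h_x + i h_y)/2`. -/
def wirtingerZbar (h : ℂ → ℂ) (z : ℂ) : ℂ :=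
  (fderiv ℝ h z 1 + Complex.I * fderiv ℝ h z Complex.I) / 2

/-- The Teichmüller ring `T(s) = ℂ \ ([-1,0] ∪ [s,∞))`. -/
def Teich (s : ℝ) : Set ℂ := (Complex.ofReal '' (Set.Icc (-1) 0 ∪ Set.Ici s))ᶜ

/-!
The map `w ↦ (i/α) log((1 + w)/(1 - w))` (Cayley transform onto the right half-plane, logarithm,
rotation) is holomorphic from the unit disk into the strip, fixes `0`, and sends the real point
`tanh (α y / 2)` to `i y`. The Schwarz lemma applied to `f` composed with it gives the bound.
-/

open Complex Metric Set

lemma Real.tanh_nonneg {x : ℝ} (hx : 0 ≤ x) : 0 ≤ Real.tanh x := by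
  rw [Real.tanh_eq_sinh_div_cosh]
  exact div_nonneg (Real.sinh_nonneg_iff.2 hx) (Real.cosh_pos x).le

lemma Real.abs_tanh (x : ℝ) : |Real.tanh x| = Real.tanh |x| := by
  rcases le_total 0 x with hx | hx
  · rw [abs_of_nonneg hx, abs_of_nonneg (Real.tanh_nonneg hx)]
  · rw [abs_of_nonpos hx, Real.tanh_neg, abs_of_nonpos]
    simpa [Real.tanh_neg] using Real.tanh_nonneg (neg_nonneg.2 hx)

lemma Real.log_one_add_div_one_sub_tanh (x : ℝ) :
    Real.log ((1 + Real.tanh x) / (1 - Real.tanh x)) = 2 * x := by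
  have hmem : Real.tanh x ∈ Icc (-1) 1 :=
    ⟨(Real.neg_one_lt_tanh x).le, (Real.tanh_lt_one x).le⟩
  have h := Real.artanh_eq_half_log hmem
  rw [Real.artanh_tanh] at h
  linarith

lemma re_one_add_div_one_sub_pos {w : ℂ} (hw : ‖w‖ < 1) : 0 < ((1 + w) / (1 - w)).re := by
  have hne : 1 - w ≠ 0 := fun h => by simp [← sub_eq_zero.1 h] at hw
  have hnum : (1 + w).re * (1 - w).re + (1 + w).im * (1 - w).im = 1 - ‖w‖ ^ 2 := by
    rw [← normSq_eq_norm_sq, normSq_apply]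
    simp only [add_re, sub_re, one_re, add_im, sub_im, one_im]
    ring
  rw [div_re, ← add_div, hnum]
  exact div_pos (by nlinarith [norm_nonneg w]) (normSq_pos.2 hne)

def diskToStrip (α : ℝ) (w : ℂ) : ℂ := I / α * log ((1 + w) / (1 - w))

lemma diskToStrip_zero (α : ℝ) : diskToStrip α 0 = 0 := by
  simp [diskToStrip]

lemma differentiableOn_diskToStrip (α : ℝ) : DifferentiableOn ℂ (diskToStrip α) (ball 0 1) := by
  intro w hw
  have hw : ‖w‖ < 1 := mem_ball_zero_iff.1 hw
  have hre := re_one_add_div_one_sub_pos hw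
  have hne : 1 - w ≠ 0 := fun h => by simp [h] at hre
  refine DifferentiableAt.differentiableWithinAt ?_
  exact (differentiableAt_const _).mul
    (((differentiableAt_const _).add differentiableAt_id).div
      ((differentiableAt_const _).sub differentiableAt_id) hne |>.clog (Or.inl hre))

lemma mapsTo_diskToStrip {α : ℝ} (hα : 0 < α) :
    MapsTo (diskToStrip α) (ball 0 1) {z : ℂ | |z.re| < Real.pi / (2 * α)} := by
  intro w hw
  set q := (1 + w) / (1 - w)
  have harg : |arg q| < Real.pi / 2 :=
    abs_arg_lt_pi_div_two_iff.2 (Or.inl (re_one_add_div_one_sub_pos (mem_ball_zero_iff.1 hw)))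
  have hre : (diskToStrip α w).re = -(arg q / α) := by
    rw [diskToStrip, div_mul_eq_mul_div, div_ofReal_re, I_mul_re, log_im, neg_div]
  show |(diskToStrip α w).re| < Real.pi / (2 * α)
  rw [hre, abs_neg, abs_div, abs_of_pos hα, ← div_div]
  exact div_lt_div_of_pos_right harg hα

lemma diskToStrip_tanh {α : ℝ} (hα : α ≠ 0) (y : ℝ) :
    diskToStrip α (Real.tanh (α * y / 2)) = I * y := by
  set t := Real.tanh (α * y / 2)
  have hpos : 0 ≤ (1 + t) / (1 - t) :=
    div_nonneg (by linarith [Real.neg_one_lt_tanh (α * y / 2)])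
      (by linarith [Real.tanh_lt_one (α * y / 2)])
  have hlog : log ((1 + t) / (1 - t)) = α * y := by
    rw [show ((1 : ℂ) + t) / (1 - t) = ((1 + t) / (1 - t) : ℝ) by push_cast; rfl,
      ← ofReal_log hpos, Real.log_one_add_div_one_sub_tanh]
    push_cast
    ring
  have hα' : (α : ℂ) ≠ 0 := ofReal_ne_zero.2 hα
  rw [diskToStrip, hlog]
  field_simp

/-- Schwarz-type estimate on the vertical strip `{|Re z| < π/(2α)}`. -/
theorem stmt2 (α : ℝ) (hα : 0 < α) (f : ℂ → ℂ)
    (hf : DifferentiableOn ℂ f {z : ℂ | |z.re| < Real.pi / (2 * α)})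
    (hb : ∀ z ∈ {z : ℂ | |z.re| < Real.pi / (2 * α)}, ‖f z‖ < 1)
    (h0 : f 0 = 0) (y : ℝ) :
    ‖f (Complex.I * (y : ℂ))‖ ≤ Real.tanh (α * |y| / 2) := by
  have hmaps : MapsTo (f ∘ diskToStrip α) (ball 0 1) (closedBall 0 1) := fun w hw =>
    mem_closedBall_zero_iff.2 (hb _ (mapsTo_diskToStrip hα hw)).le
  have hw : ‖(Real.tanh (α * y / 2) : ℂ)‖ < 1 := by
    rw [norm_real, Real.norm_eq_abs]
    exact Real.abs_tanh_lt_one _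
  have hschwarz := norm_le_norm_of_mapsTo_ball
    (hf.comp (differentiableOn_diskToStrip α) (mapsTo_diskToStrip hα)) hmaps
    (by simp [diskToStrip_zero, h0]) hw
  rwa [Function.comp_apply, diskToStrip_tanh hα.ne', norm_real, Real.norm_eq_abs, Real.abs_tanh,
    abs_div, abs_mul, abs_of_pos hα, abs_two] at hschwarz
end
end

section
/- For all real numbers s, t with 0 < s < t, there exists a harmonic homeomorphism from the Teichmüller ring T(s) onto the Teichmüller ring T(t). -/
/-
With `G` the branch of `√(z² + z)` on `ℂ ∖ [-1, 0]` asymptotic to `z` at infinity, take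
`h(z) = z + 2c Re G(z)`. It is harmonic and preserves imaginary parts. Writing `u = √(1 + 1/z)`
(so `Re u > 0`), one finds `G' = (u + u⁻¹)/2` and `G - z = 1/(u + 1)`; hence `Re G' > 0`, so
`Re h` is strictly increasing along every horizontal line, and `|G - z| ≤ 1`, so it is onto `ℝ`
on every line off the real axis. On the real axis `h(x) = x ± 2c√(x² + x)` maps `(-∞, -1)` onto
itself and `(0, s)` onto `(0, s + 2c√(s² + s))`, and `c` is chosen to make the endpoint `t`.
The Jacobian `1 + 2c Re G'` is positive, so by the inverse function theorem `h` is open and its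
inverse is continuous.
-/

noncomputable section

open Set Filter Topology InnerProductSpace Laplacian

theorem harmonicOnReal_of_harmonicOnNhd {u : ℂ → ℝ} {Ω : Set ℂ} (hu : HarmonicOnNhd u Ω) :
    HarmonicOnReal u Ω := by
  refine ⟨hu.contDiffOn, fun z hz => ?_⟩
  have hdiff : DifferentiableAt ℝ (fderiv ℝ u) z :=
    ((hu z hz).1.fderiv_right (m := 1) le_rfl).differentiableAt one_ne_zero
  have hΔ : Δ u z = 0 := (hu z hz).2.self_of_nhds
  rw [laplacian_eq_iteratedFDeriv_complexPlane] at hΔ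
  simpa [iteratedFDeriv_two_apply, fderiv_clm_apply hdiff (differentiableAt_const _)] using hΔ

theorem Set.LeftInvOn.continuousAt_of_le_map_nhds {X Y : Type*} [TopologicalSpace X]
    [TopologicalSpace Y] {f : X → Y} {g : Y → X} {s : Set X} {x : X} (hg : LeftInvOn g f s)
    (hs : s ∈ 𝓝 x) (hf : 𝓝 (f x) ≤ map f (𝓝 x)) : ContinuousAt g (f x) := by
  have hgf : g ∘ f =ᶠ[𝓝 x] id := Filter.mem_of_superset hs fun y hy => hg hy
  calc map g (𝓝 (f x)) ≤ map g (map f (𝓝 x)) := map_mono hf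
    _ = map (g ∘ f) (𝓝 x) := map_map
    _ = 𝓝 x := by rw [map_congr hgf, map_id]
    _ = 𝓝 (g (f x)) := by rw [hg (mem_of_mem_nhds hs)]

theorem map_nhds_add_ofReal_re_eq {F : ℂ → ℂ} {F' z : ℂ} (hF : HasStrictDerivAt F F' z)
    (hF' : 1 + F'.re ≠ 0) :
    map (fun w => w + ((F w).re : ℂ)) (𝓝 z) = 𝓝 (z + (F z).re) := by
  have hre := Complex.reCLM.hasStrictFDerivAt.comp z (hF.hasStrictFDerivAt.restrictScalars ℝ)
  set L : ℂ →L[ℝ] ℝ :=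
    Complex.reCLM.comp ((ContinuousLinearMap.toSpanSingleton ℂ F').restrictScalars ℝ)
  have hL : ∀ r : ℝ, L r = r * F'.re := fun r => by simp [L]
  set M : ℂ →L[ℝ] ℂ := ContinuousLinearMap.id ℝ ℂ + Complex.ofRealCLM.comp L
  have hinj : Function.Injective M := by
    refine (injective_iff_map_eq_zero M).2 fun v hv => ?_
    have hv' : v + (L v : ℂ) = 0 := hv
    obtain ⟨r, rfl⟩ : ∃ r : ℝ, v = r :=
      ⟨v.re, Complex.ext rfl (by simpa using congrArg Complex.im hv')⟩
    have : r * (1 + F'.re) = 0 := by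
      have := congrArg Complex.re hv'
      simp only [hL, Complex.add_re, Complex.ofReal_re, Complex.zero_re] at this
      linarith
    simpa [hF'] using this
  have hsurj : LinearMap.range (M : ℂ →ₗ[ℝ] ℂ) = ⊤ :=
    LinearMap.range_eq_top.mpr (LinearMap.injective_iff_surjective.mp hinj)
  exact ((hasStrictFDerivAt_id z).add
    (Complex.ofRealCLM.hasStrictFDerivAt.comp z hre)).map_nhds_eq_of_surj hsurj

theorem bijOn_of_im_eq_of_bijOn_re_mk {h : ℂ → ℂ} {Ω Ω' : Set ℂ} (him : ∀ z, (h z).im = z.im)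
    (hre : ∀ y : ℝ, BijOn (fun x : ℝ => (h ⟨x, y⟩).re)
      {x | (⟨x, y⟩ : ℂ) ∈ Ω} {x | (⟨x, y⟩ : ℂ) ∈ Ω'}) :
    BijOn h Ω Ω' := by
  have hslice : ∀ z, h z = ⟨(h ⟨z.re, z.im⟩).re, z.im⟩ := fun z => Complex.ext rfl (him z)
  refine ⟨fun z hz => ?_, fun z₁ hz₁ z₂ hz₂ heq => ?_, fun w hw => ?_⟩
  · rw [hslice]
    exact (hre z.im).mapsTo (show z.re ∈ {x | (⟨x, z.im⟩ : ℂ) ∈ Ω} from hz)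
  · have hy : z₁.im = z₂.im := by simpa [him] using congrArg Complex.im heq
    refine Complex.ext ((hre z₁.im).injOn (show z₁.re ∈ {x | (⟨x, z₁.im⟩ : ℂ) ∈ Ω} from hz₁)
      (show z₂.re ∈ {x | (⟨x, z₁.im⟩ : ℂ) ∈ Ω} by rw [hy]; exact hz₂) ?_) hy
    show (h ⟨z₁.re, z₁.im⟩).re = (h ⟨z₂.re, z₁.im⟩).re
    rw [Complex.eta, hy, Complex.eta, heq]
  · obtain ⟨x, hx, hxw⟩ := (hre w.im).surjOn (show w.re ∈ {x | (⟨x, w.im⟩ : ℂ) ∈ Ω'} from hw)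
    exact ⟨⟨x, w.im⟩, hx, Complex.ext hxw (him _)⟩

theorem Complex.cpow_inv_two_mul_self (w : ℂ) : w ^ (2⁻¹ : ℂ) * w ^ (2⁻¹ : ℂ) = w := by
  simpa [sq] using Complex.cpow_ofNat_inv_pow w 2

theorem Complex.re_cpow_inv_two_pos {w : ℂ} (hw : w ∈ Complex.slitPlane) :
    0 < (w ^ (2⁻¹ : ℂ)).re := by
  have hne : w.re ≠ -‖w‖ := fun h =>
    Complex.mem_slitPlane_iff_not_le_zero.1 hw (Complex.re_eq_neg_norm.1 h)
  have hle := neg_le_of_abs_le (Complex.abs_re_le_norm w)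
  rw [Complex.cpow_inv_two_re, Real.sqrt_pos]
  have := lt_of_le_of_ne hle hne.symm
  linarith

section sqrtMaps

variable {c : ℝ}

theorem strictMonoOn_add_mul_sqrt (hc : 0 ≤ c) :
    StrictMonoOn (fun x => x + c * √(x ^ 2 + x)) (Ici 0) := by
  intro a ha b _ hab
  have : √(a ^ 2 + a) ≤ √(b ^ 2 + b) :=
    Real.sqrt_le_sqrt (by simp only [mem_Ici] at ha; nlinarith)
  dsimp only
  nlinarith

theorem strictMonoOn_sub_mul_sqrt (hc : 0 ≤ c) :
    StrictMonoOn (fun x => x - c * √(x ^ 2 + x)) (Iic (-1)) := by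
  intro a _ b hb hab
  have : √(b ^ 2 + b) ≤ √(a ^ 2 + a) :=
    Real.sqrt_le_sqrt (by simp only [mem_Iic] at hb; nlinarith)
  dsimp only
  nlinarith

theorem bijOn_add_mul_sqrt (hc : 0 ≤ c) {s : ℝ} (hs : 0 ≤ s) :
    BijOn (fun x => x + c * √(x ^ 2 + x)) (Ioo 0 s) (Ioo 0 (s + c * √(s ^ 2 + s))) := by
  have hmono := strictMonoOn_add_mul_sqrt hc
  have himg := ContinuousOn.image_Ioo_of_strictMonoOn hs (by fun_prop)
    (hmono.mono Icc_subset_Ici_self)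
  norm_num at himg
  rw [← himg]
  exact (hmono.injOn.mono (Ioo_subset_Icc_self.trans Icc_subset_Ici_self)).bijOn_image

theorem bijOn_sub_mul_sqrt (hc : 0 ≤ c) :
    BijOn (fun x => x - c * √(x ^ 2 + x)) (Iio (-1)) (Iio (-1)) := by
  have hmono := strictMonoOn_sub_mul_sqrt hc
  have himg := ContinuousOn.image_Iio_of_strictMonoOn (by fun_prop) hmono
    (tendsto_atBot_mono (fun x => sub_le_self x (by positivity)) tendsto_id)
  norm_num at himg
  nth_rw 2 [← himg]
  exact (hmono.injOn.mono Iio_subset_Iic_self).bijOn_image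

end sqrtMaps

def quadRootDomain : Set ℂ := (Complex.ofReal '' Icc (-1) 0)ᶜ

-- The branch of `√(z² + z)` on `quadRootDomain` that is asymptotic to `z` at infinity.
def quadRoot (z : ℂ) : ℂ := z * (1 + z⁻¹) ^ (2⁻¹ : ℂ)

theorem isOpen_quadRootDomain : IsOpen quadRootDomain :=
  (Complex.isometry_ofReal.isClosedEmbedding.isClosedMap _ isClosed_Icc).isOpen_compl

theorem mem_quadRootDomain_of_im_ne_zero {z : ℂ} (hz : z.im ≠ 0) : z ∈ quadRootDomain :=
  fun ⟨x, _, hx⟩ => hz (hx ▸ Complex.ofReal_im x)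

theorem ne_zero_of_mem_quadRootDomain {z : ℂ} (hz : z ∈ quadRootDomain) : z ≠ 0 := by
  rintro rfl
  exact hz ⟨0, by norm_num, Complex.ofReal_zero⟩

theorem one_add_inv_mem_slitPlane {z : ℂ} (hz : z ∈ quadRootDomain) :
    1 + z⁻¹ ∈ Complex.slitPlane := by
  rw [Complex.mem_slitPlane_iff_not_le_zero, Complex.le_def]
  rintro ⟨hre, him⟩
  set r := z⁻¹.re
  have hr : r ≤ -1 := by
    simp only [Complex.add_re, Complex.one_re, Complex.zero_re] at hre
    linarith
  have hzr : z = ((r⁻¹ : ℝ) : ℂ) := by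
    rw [Complex.ofReal_inv, ← inv_inv z]
    exact congrArg _ (Complex.ext rfl (by simpa using him))
  refine hz ⟨r⁻¹, ⟨?_, (inv_neg''.2 (by linarith)).le⟩, hzr.symm⟩
  rw [le_inv_of_neg (by norm_num) (by linarith)]
  simpa using hr

theorem hasStrictDerivAt_quadRoot {z : ℂ} (hz : z ∈ quadRootDomain) :
    HasStrictDerivAt quadRoot
      (((1 + z⁻¹) ^ (2⁻¹ : ℂ) + ((1 + z⁻¹) ^ (2⁻¹ : ℂ))⁻¹) / 2) z := by
  have hz0 := ne_zero_of_mem_quadRootDomain hz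
  have hsp := one_add_inv_mem_slitPlane hz
  have hroot := ((hasStrictDerivAt_inv hz0).const_add 1).cpow_const (c := 2⁻¹) hsp
  refine ((hasStrictDerivAt_id z).mul hroot).congr_deriv ?_
  have hsq := Complex.cpow_inv_two_mul_self (1 + z⁻¹)
  rw [show (2⁻¹ : ℂ) - 1 = -2⁻¹ by norm_num, Complex.cpow_neg]
  set u := (1 + z⁻¹) ^ (2⁻¹ : ℂ)
  have hu : u ≠ 0 := fun h => (Complex.re_cpow_inv_two_pos hsp).ne' (by simp [u, h])
  simp only [id]
  field_simp
  linear_combination z * hsq + mul_inv_cancel₀ hz0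

theorem differentiableOn_quadRoot : DifferentiableOn ℂ quadRoot quadRootDomain := fun _ hz =>
  (hasStrictDerivAt_quadRoot hz).hasDerivAt.differentiableAt.differentiableWithinAt

theorem re_deriv_quadRoot_pos {z : ℂ} (hz : z ∈ quadRootDomain) :
    0 < (deriv quadRoot z).re := by
  rw [(hasStrictDerivAt_quadRoot hz).hasDerivAt.deriv]
  have hu := Complex.re_cpow_inv_two_pos (one_add_inv_mem_slitPlane hz)
  set u := (1 + z⁻¹) ^ (2⁻¹ : ℂ)
  have hinv : 0 < u⁻¹.re := by
    rw [Complex.inv_re]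
    exact div_pos hu (Complex.normSq_pos.2 fun h => by simp [h] at hu)
  rw [Complex.div_ofNat_re, Complex.add_re]
  linarith

theorem norm_quadRoot_sub_le {z : ℂ} (hz : z ∈ quadRootDomain) : ‖quadRoot z - z‖ ≤ 1 := by
  have hz0 := ne_zero_of_mem_quadRootDomain hz
  have hu := Complex.re_cpow_inv_two_pos (one_add_inv_mem_slitPlane hz)
  have hsq := Complex.cpow_inv_two_mul_self (1 + z⁻¹)
  set u := (1 + z⁻¹) ^ (2⁻¹ : ℂ)
  have hu1 : 1 ≤ ‖u + 1‖ := by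
    calc (1 : ℝ) ≤ (u + 1).re := by simp; linarith
      _ ≤ ‖u + 1‖ := Complex.re_le_norm _
  have hG : quadRoot z - z = (u + 1)⁻¹ := by
    refine eq_inv_of_mul_eq_one_left ?_
    simp only [quadRoot]
    linear_combination z * hsq + mul_inv_cancel₀ hz0
  rw [hG, norm_inv]
  exact inv_le_one_of_one_le₀ hu1

theorem quadRoot_ofReal {x : ℝ} (hx : 0 < 1 + x⁻¹) :
    quadRoot x = ((x * √(1 + x⁻¹) : ℝ) : ℂ) := by
  rw [quadRoot, Real.sqrt_eq_rpow, Complex.ofReal_mul, Complex.ofReal_cpow hx.le]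
  norm_num

theorem quadRoot_ofReal_of_pos {x : ℝ} (hx : 0 < x) : quadRoot x = √(x ^ 2 + x) := by
  rw [quadRoot_ofReal (by positivity)]
  congr 1
  rw [show x ^ 2 + x = x ^ 2 * (1 + x⁻¹) by field_simp, Real.sqrt_mul (sq_nonneg x),
    Real.sqrt_sq hx.le]

theorem quadRoot_ofReal_of_lt_neg_one {x : ℝ} (hx : x < -1) :
    quadRoot x = -√(x ^ 2 + x) := by
  have hx0 : x ≠ 0 := by linarith
  have hpos : 0 < 1 + x⁻¹ := by
    have : -1 < x⁻¹ := by rw [lt_inv_of_neg (by norm_num) (by linarith)]; simpa using hx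
    linarith
  rw [quadRoot_ofReal hpos, ← Complex.ofReal_neg]
  congr 1
  rw [show x ^ 2 + x = (-x) ^ 2 * (1 + x⁻¹) by field_simp, Real.sqrt_mul (sq_nonneg _),
    Real.sqrt_sq (by linarith)]
  ring

theorem mem_Teich_iff {s : ℝ} {z : ℂ} :
    z ∈ Teich s ↔ z.im ≠ 0 ∨ z.re ∉ Icc (-1) 0 ∪ Ici s := by
  rw [Teich, mem_compl_iff, ← not_and_or, not_iff_not]
  constructor
  · rintro ⟨x, hx, rfl⟩
    exact ⟨Complex.ofReal_im x, hx⟩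
  · rintro ⟨him, hre⟩
    exact ⟨z.re, hre, Complex.ext rfl him.symm⟩

theorem isOpen_Teich (s : ℝ) : IsOpen (Teich s) :=
  (Complex.isometry_ofReal.isClosedEmbedding.isClosedMap _
    (isClosed_Icc.union isClosed_Ici)).isOpen_compl

theorem Teich_subset_quadRootDomain (s : ℝ) : Teich s ⊆ quadRootDomain :=
  compl_subset_compl.2 (image_mono subset_union_left)

theorem setOf_mk_mem_Teich_of_ne_zero (s : ℝ) {y : ℝ} (hy : y ≠ 0) :
    {x : ℝ | (⟨x, y⟩ : ℂ) ∈ Teich s} = univ :=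
  eq_univ_of_forall fun _ => mem_Teich_iff.2 (Or.inl hy)

theorem setOf_mk_zero_mem_Teich {s : ℝ} (hs : 0 < s) :
    {x : ℝ | (⟨x, 0⟩ : ℂ) ∈ Teich s} = Iio (-1) ∪ Ioo 0 s := by
  ext x
  simp only [mem_ofPred_eq, mem_Teich_iff, ne_eq, not_true_eq_false, false_or, mem_union,
    mem_Icc, mem_Ici, mem_Iio, mem_Ioo]
  grind

def teichMap (c : ℝ) (z : ℂ) : ℂ := z + ((2 * c * quadRoot z).re : ℂ)

section teichMap

variable {c : ℝ}

theorem teichMap_im (z : ℂ) : (teichMap c z).im = z.im := by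
  simp [teichMap]

theorem teichMap_re (z : ℂ) : (teichMap c z).re = z.re + 2 * c * (quadRoot z).re := by
  simp [teichMap]

theorem harmonicMapOn_teichMap {Ω : Set ℂ} (hΩ : Ω ⊆ quadRootDomain) :
    HarmonicMapOn (teichMap c) Ω := by
  have hF : DifferentiableOn ℂ (fun z => z + 2 * c * quadRoot z) quadRootDomain :=
    differentiableOn_id.add (differentiableOn_quadRoot.const_mul _)
  refine ⟨harmonicOnReal_of_harmonicOnNhd fun z hz => ?_,
    harmonicOnReal_of_harmonicOnNhd fun z _ => ?_⟩
  · have := (hF.analyticAt (isOpen_quadRootDomain.mem_nhds (hΩ hz))).harmonicAt_re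
    simpa [teichMap, Complex.add_re] using this
  · simpa [teichMap_im] using analyticAt_id.harmonicAt_im

theorem map_nhds_teichMap (hc : 0 ≤ c) {z : ℂ} (hz : z ∈ quadRootDomain) :
    map (teichMap c) (𝓝 z) = 𝓝 (teichMap c z) := by
  have hG := hasStrictDerivAt_quadRoot hz
  rw [← hG.hasDerivAt.deriv] at hG
  refine map_nhds_add_ofReal_re_eq (hG.const_mul (2 * c : ℂ)) (ne_of_gt ?_)
  rw [show (2 * c : ℂ) = ((2 * c : ℝ) : ℂ) by push_cast; ring, Complex.re_ofReal_mul]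
  nlinarith [re_deriv_quadRoot_pos hz]

theorem continuousOn_teichMap : ContinuousOn (teichMap c) quadRootDomain :=
  continuousOn_id.add (Complex.continuous_ofReal.comp_continuousOn
    (Complex.continuous_re.comp_continuousOn
      (continuousOn_const.mul differentiableOn_quadRoot.continuousOn)))

theorem bijective_teichMap_re_mk (hc : 0 ≤ c) {y : ℝ} (hy : y ≠ 0) :
    Function.Bijective fun x : ℝ => (teichMap c ⟨x, y⟩).re := by
  have hmem : ∀ x : ℝ, (x + y * Complex.I : ℂ) ∈ quadRootDomain := fun x =>
    mem_quadRootDomain_of_im_ne_zero (by simpa using hy)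
  let f : ℝ → ℝ := fun x => x + 2 * c * (quadRoot (x + y * Complex.I)).re
  have hf : (fun x : ℝ => (teichMap c ⟨x, y⟩).re) = f := by
    funext x
    simp [f, teichMap_re, Complex.mk_eq_add_mul_I]
  rw [hf]
  have hderiv : ∀ x : ℝ, HasDerivAt f (1 + 2 * c * (deriv quadRoot (x + y * Complex.I)).re) x :=
    fun x => by
      have hG := (hasStrictDerivAt_quadRoot (hmem x)).hasDerivAt
      rw [← hG.deriv] at hG
      exact (hasDerivAt_id x).add ((hG.comp_add_const _ _).real_of_complex.const_mul (2 * c))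
  have hmono : StrictMono f :=
    strictMono_of_hasDerivAt_pos hderiv fun x => by nlinarith [re_deriv_quadRoot_pos (hmem x)]
  have hbound : ∀ x : ℝ, |(quadRoot (x + y * Complex.I)).re - x| ≤ 1 := fun x => by
    simpa using (Complex.abs_re_le_norm _).trans (norm_quadRoot_sub_le (hmem x))
  have htop : Tendsto f atTop atTop := by
    refine tendsto_atTop_mono (fun x => ?_) (tendsto_atTop_add_const_right _ (-(2 * c))
      (tendsto_id.const_mul_atTop (show 0 < 1 + 2 * c by linarith)))
    have := (abs_le.1 (hbound x)).1
    dsimp only [f, id]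
    nlinarith
  have hbot : Tendsto f atBot atBot := by
    refine tendsto_atBot_mono (fun x => ?_) (tendsto_atBot_add_const_right _ (2 * c)
      (tendsto_id.const_mul_atBot (show 0 < 1 + 2 * c by linarith)))
    have := (abs_le.1 (hbound x)).2
    dsimp only [f, id]
    nlinarith
  have hcont : Continuous f := continuous_iff_continuousAt.2 fun x => (hderiv x).continuousAt
  exact ⟨hmono.injective, hcont.surjective htop hbot⟩

theorem bijOn_teichMap_re_ofReal (hc : 0 ≤ c) {s : ℝ} (hs : 0 < s) :
    BijOn (fun x : ℝ => (teichMap c x).re) (Iio (-1) ∪ Ioo 0 s)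
      (Iio (-1) ∪ Ioo 0 (s + 2 * c * √(s ^ 2 + s))) := by
  have hneg : BijOn (fun x : ℝ => (teichMap c x).re) (Iio (-1)) (Iio (-1)) :=
    (bijOn_sub_mul_sqrt (c := 2 * c) (by linarith)).congr fun x hx => by
      simp [teichMap_re, quadRoot_ofReal_of_lt_neg_one (mem_Iio.1 hx)]
      ring
  have hpos : BijOn (fun x : ℝ => (teichMap c x).re) (Ioo 0 s)
      (Ioo 0 (s + 2 * c * √(s ^ 2 + s))) :=
    (bijOn_add_mul_sqrt (c := 2 * c) (by linarith) hs.le).congr fun x hx => by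
      simp [teichMap_re, quadRoot_ofReal_of_pos hx.1]
  refine hneg.union hpos ((injOn_union ?_).2 ⟨hneg.injOn, hpos.injOn, fun x hx x' hx' h => ?_⟩)
  · exact disjoint_left.2 fun x h₁ h₂ => by linarith [mem_Iio.1 h₁, (mem_Ioo.1 h₂).1]
  · have h1 := hneg.mapsTo hx
    have h2 := hpos.mapsTo hx'
    simp only [mem_Iio, mem_Ioo] at h1 h2
    linarith

end teichMap

/-- Case 1 of Theorem 3: for `0 < s < t` there is a harmonic homeomorphism
from the Teichmüller ring `T(s)` onto `T(t)`. -/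
theorem stmt8 (s t : ℝ) (hs : 0 < s) (hst : s < t) :
    ∃ h : ℂ → ℂ, IsHarmonicHomeoOn h (Teich s) (Teich t) := by
  set c := (t - s) / (2 * √(s ^ 2 + s))
  have hroot : 0 < √(s ^ 2 + s) := Real.sqrt_pos.2 (by positivity)
  have hc : 0 ≤ c := div_nonneg (by linarith) (by positivity)
  have hct : s + 2 * c * √(s ^ 2 + s) = t := by simp only [c]; field_simp; ring
  have hdom := Teich_subset_quadRootDomain s
  have hbij : BijOn (teichMap c) (Teich s) (Teich t) := by
    refine bijOn_of_im_eq_of_bijOn_re_mk teichMap_im fun y => ?_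
    rcases eq_or_ne y 0 with rfl | hy
    · rw [setOf_mk_zero_mem_Teich hs, setOf_mk_zero_mem_Teich (hs.trans hst), ← hct]
      exact bijOn_teichMap_re_ofReal hc hs
    · rw [setOf_mk_mem_Teich_of_ne_zero s hy, setOf_mk_mem_Teich_of_ne_zero t hy]
      exact bijOn_univ.2 (bijective_teichMap_re_mk hc hy)
  have hinv := hbij.invOn_invFunOn
  refine ⟨teichMap c, harmonicMapOn_teichMap hdom, continuousOn_teichMap.mono hdom, hbij,
    Function.invFunOn (teichMap c) (Teich s), fun w hw => ?_, fun z hz => hinv.1 hz,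
    fun w hw => hinv.2 hw⟩
  obtain ⟨z, hz, rfl⟩ := hbij.surjOn hw
  exact (hinv.1.continuousAt_of_le_map_nhds ((isOpen_Teich s).mem_nhds hz)
    (map_nhds_teichMap hc (hdom hz)).ge).continuousWithinAt
end
end

section
/- Let 1 < α ≤ 3/2 and let G = ℂ ∖ (−∞,0] be the slit plane. Define h : G → ℂ by h(z) = Re(z^α) + i·Im(z), where z^α is the principal branch of the power (so that 1^α = 1). Then h is a homeomorphism of G onto G whose real and imaginary parts are harmonic, and for every s > 0 it maps G ∖ [s, s+1] onto G ∖ [s^α, (s+1)^α]. -/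
noncomputable section

/-! Along the line `Im z = y` the real part `t ↦ Re((t + iy)^α)` has derivative
`α Re((t + iy)^(α-1)) > 0`, because `|arg z^(α-1)| < (α-1)π ≤ π/2`; for `y ≠ 0` it tends to `±∞`
at `±∞`, as one sees from `Re z^α = Re z · Re z^(α-1) - Im z · Im z^(α-1)`. So `h` maps each
horizontal line of `G` bijectively onto itself, and its real Jacobian is that same positive
derivative, so the inverse function theorem makes `h⁻¹` continuous. `Re z^α` and `Im z` are real
parts of holomorphic functions, hence harmonic, and `h(x) = x^α` on the positive axis. -/

open Complex Set Filter Topology Function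
open scoped Real

lemma compl_image_ofReal_Iic_zero : (ofReal '' Iic 0)ᶜ = slitPlane := by
  ext z
  simp only [mem_compl_iff, mem_image, mem_Iic, mem_slitPlane_iff]
  constructor
  · intro hz
    by_contra! h
    exact hz ⟨z.re, h.1, Complex.ext rfl (by simp [h.2])⟩
  · rintro (h | h) ⟨x, hx, rfl⟩ <;> simp_all [not_lt.2 hx]

lemma ofReal_add_mul_I_mem_slitPlane {x y : ℝ} :
    (x + y * I : ℂ) ∈ slitPlane ↔ 0 < x ∨ y ≠ 0 := by
  simp [mem_slitPlane_iff]

lemma InnerProductSpace.HarmonicOnNhd.harmonicOnReal {u : ℂ → ℝ} {Ω : Set ℂ}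
    (hu : InnerProductSpace.HarmonicOnNhd u Ω) : HarmonicOnReal u Ω := by
  refine ⟨hu.contDiffOn, fun z hz => ?_⟩
  obtain ⟨hC2, hΔ⟩ := hu z hz
  have hdiff : DifferentiableAt ℝ (fderiv ℝ u) z :=
    (hC2.fderiv_right (m := 1) le_rfl).differentiableAt one_ne_zero
  have hsecond (v : ℂ) :
      fderiv ℝ (fun w => fderiv ℝ u w v) z v = iteratedFDeriv ℝ 2 u z ![v, v] := by
    rw [fderiv_clm_apply hdiff (differentiableAt_const v), iteratedFDeriv_two_apply]
    simp
  rw [hsecond, hsecond,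
    ← congrFun (InnerProductSpace.laplacian_eq_iteratedFDeriv_complexPlane u) z]
  exact hΔ.eq_of_nhds

theorem HasStrictFDerivAt.continuousAt_invFunOn {𝕜 E : Type*} [NontriviallyNormedField 𝕜]
    [CompleteSpace 𝕜] [NormedAddCommGroup E] [NormedSpace 𝕜 E] [FiniteDimensional 𝕜 E]
    {f : E → E} {f' : E →L[𝕜] E} {s : Set E} {a : E}
    (hf : HasStrictFDerivAt f f' a) (hf' : Injective f') (hs : s ∈ 𝓝 a) (hinj : InjOn f s) :
    ContinuousAt (invFunOn f s) (f a) := by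
  have : CompleteSpace E := FiniteDimensional.complete 𝕜 E
  let e : E ≃L[𝕜] E := (LinearEquiv.ofInjectiveEndo f'.toLinearMap hf').toContinuousLinearEquiv
  have he : HasStrictFDerivAt f (e : E →L[𝕜] E) a := hf
  exact he.localInverse_continuousAt.congr <| EventuallyEq.symm <| he.localInverse_unique <|
    eventually_of_mem hs fun _ hx => hinj.leftInvOn_invFunOn hx

lemma re_cpow_pos {β : ℝ} (hβ : |β| ≤ 1 / 2) {z : ℂ} (hz : z ∈ slitPlane) :
    0 < (z ^ (β : ℂ)).re := by
  rw [cpow_ofReal_re]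
  have harg : |arg z| < π := (abs_arg_le_pi z).lt_of_ne
    (by simpa [abs_eq Real.pi_pos.le, slitPlane_arg_ne_pi hz] using (neg_pi_lt_arg z).ne')
  have hβarg : |arg z * β| < π / 2 := by
    rw [abs_mul]
    nlinarith [abs_nonneg (arg z), abs_nonneg β]
  exact mul_pos (Real.rpow_pos_of_pos (norm_pos_iff.2 (slitPlane_ne_zero hz)) β)
    (Real.cos_pos_of_mem_Ioo (abs_lt.1 hβarg))

lemma re_mul_cpow_sub_one_pos {α : ℝ} (hα : 1 / 2 ≤ α) (hα' : α ≤ 3 / 2) {z : ℂ}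
    (hz : z ∈ slitPlane) : 0 < ((α : ℂ) * z ^ ((α : ℂ) - 1)).re := by
  have hcast : (α : ℂ) - 1 = ((α - 1 : ℝ) : ℂ) := by push_cast; ring
  rw [hcast, re_ofReal_mul]
  exact mul_pos (by linarith) (re_cpow_pos (abs_le.2 ⟨by linarith, by linarith⟩) hz)

lemma cpow_eq_mul_cpow_sub_one {z : ℂ} (hz : z ≠ 0) (α : ℝ) :
    z ^ (α : ℂ) = z * z ^ ((α - 1 : ℝ) : ℂ) := by
  conv_lhs => rw [show (α : ℂ) = 1 + ((α - 1 : ℝ) : ℂ) by push_cast; ring]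
  rw [cpow_add _ _ hz, cpow_one]

def rePowOnLine (α y t : ℝ) : ℝ := ((t + y * I : ℂ) ^ (α : ℂ)).re

lemma rePowOnLine_im_re (α : ℝ) (z : ℂ) : rePowOnLine α z.im z.re = (z ^ (α : ℂ)).re := by
  rw [rePowOnLine, re_add_im]

lemma hasDerivAt_rePowOnLine {α y x : ℝ} (hx : (x + y * I : ℂ) ∈ slitPlane) :
    HasDerivAt (rePowOnLine α y) ((α * (x + y * I : ℂ) ^ ((α : ℂ) - 1)).re) x := by
  have := (hasStrictDerivAt_cpow_const (c := (α : ℂ)) hx).hasDerivAt.comp (x : ℂ)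
    ((hasDerivAt_id (x : ℂ)).add_const (y * I))
  exact this.real_of_complex.congr_deriv (by simp)

lemma strictMonoOn_rePowOnLine {α : ℝ} (hα : 1 / 2 ≤ α) (hα' : α ≤ 3 / 2) (y : ℝ) :
    StrictMonoOn (rePowOnLine α y) {x : ℝ | (x + y * I : ℂ) ∈ slitPlane} := by
  have hopen : IsOpen {x : ℝ | (x + y * I : ℂ) ∈ slitPlane} :=
    isOpen_slitPlane.preimage (by fun_prop)
  have hconvex : Convex ℝ {x : ℝ | (x + y * I : ℂ) ∈ slitPlane} := by
    refine convex_iff_ordConnected.2 ⟨fun a ha b _ x hx => ?_⟩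
    simp only [mem_ofPred_eq, ofReal_add_mul_I_mem_slitPlane] at ha ⊢
    exact ha.imp_left (·.trans_le hx.1)
  refine strictMonoOn_of_deriv_pos hconvex
    (fun x hx => (hasDerivAt_rePowOnLine hx).continuousAt.continuousWithinAt) fun x hx => ?_
  rw [hopen.interior_eq] at hx
  rw [(hasDerivAt_rePowOnLine hx).deriv]
  exact re_mul_cpow_sub_one_pos hα hα' hx

lemma rePowOnLine_ge {α : ℝ} (hα : 1 ≤ α) (hα' : α ≤ 3 / 2) {x y : ℝ} (hx : 1 ≤ x)
    (hy : |y| ≤ x * Real.cos (π / 4)) : x * Real.cos (π / 4) - |y| ≤ rePowOnLine α y x := by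
  set z : ℂ := x + y * I with hz
  set β := α - 1
  have hre : z.re = x := by simp [hz]
  have him : z.im = y := by simp [hz]
  have hz0 : z ≠ 0 := slitPlane_ne_zero (ofReal_add_mul_I_mem_slitPlane.2 (Or.inl (by linarith)))
  have hxz : x ≤ ‖z‖ := hre ▸ re_le_norm z
  have hrβ : 1 ≤ ‖z‖ ^ β := Real.one_le_rpow (hx.trans hxz) (by linarith)
  have harg : |arg z| ≤ π / 2 := abs_arg_le_pi_div_two_iff.2 (by linarith)
  have hcos : Real.cos (π / 4) ≤ Real.cos (arg z * β) := by
    rw [← Real.cos_abs (arg z * β)]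
    apply Real.cos_le_cos_of_nonneg_of_le_pi (abs_nonneg _) (by linarith [Real.pi_pos])
    rw [abs_mul, abs_of_nonneg (by linarith : 0 ≤ β)]
    nlinarith [abs_nonneg (arg z)]
  have hsin : y * Real.sin (arg z * β) ≤ |y| := by
    refine (le_abs_self _).trans ?_
    rw [abs_mul]
    exact mul_le_of_le_one_right (abs_nonneg y) (Real.abs_sin_le_one _)
  change x * Real.cos (π / 4) - |y| ≤ (z ^ (α : ℂ)).re
  rw [cpow_eq_mul_cpow_sub_one hz0, mul_re, cpow_ofReal_re, cpow_ofReal_im, hre, him]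
  have h1 : x * Real.cos (π / 4) * ‖z‖ ^ β ≤ x * (‖z‖ ^ β * Real.cos (arg z * β)) := by
    nlinarith [mul_nonneg (mul_nonneg (by linarith : (0 : ℝ) ≤ x) (zero_le_one.trans hrβ))
      (sub_nonneg.2 hcos)]
  have h2 : y * (‖z‖ ^ β * Real.sin (arg z * β)) ≤ |y| * ‖z‖ ^ β := by
    nlinarith [mul_le_mul_of_nonneg_right hsin (zero_le_one.trans hrβ)]
  have h3 : x * Real.cos (π / 4) - |y| ≤ (x * Real.cos (π / 4) - |y|) * ‖z‖ ^ β :=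
    le_mul_of_one_le_right (sub_nonneg.2 hy) hrβ
  linarith

lemma rePowOnLine_le {α : ℝ} (hα : 1 ≤ α) (hα' : α ≤ 3 / 2) {x y : ℝ} (hx : x < 0)
    (hy : y ≠ 0) :
    rePowOnLine α y x ≤ -(|y| * Real.sin (π / 2 * (α - 1)) * (-x) ^ (α - 1)) := by
  set z : ℂ := x + y * I with hz
  set β := α - 1
  have hre : z.re = x := by simp [hz]
  have him : z.im = y := by simp [hz]
  have hzs : z ∈ slitPlane := ofReal_add_mul_I_mem_slitPlane.2 (Or.inr hy)
  have hxz : -x ≤ ‖z‖ := by simpa [hre, abs_of_neg hx] using abs_re_le_norm z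
  have harg : π / 2 < |arg z| := not_le.1 fun h => by linarith [abs_arg_le_pi_div_two_iff.1 h]
  have hsin : Real.sin (π / 2 * β) ≤ Real.sin (|arg z| * β) :=
    Real.sin_le_sin_of_le_of_le_pi_div_two (by nlinarith [Real.pi_pos])
      (by nlinarith [abs_arg_le_pi z]) (by nlinarith)
  have hsin0 : 0 ≤ Real.sin (π / 2 * β) :=
    Real.sin_nonneg_of_nonneg_of_le_pi (by positivity) (by nlinarith [Real.pi_pos])
  have hsign : y * Real.sin (arg z * β) = |y| * Real.sin (|arg z| * β) := by
    rcases hy.lt_or_gt with hneg | hpos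
    · rw [abs_of_neg hneg, abs_of_neg (arg_neg_iff.2 (him ▸ hneg)), neg_mul (arg z),
        Real.sin_neg]
      ring
    · rw [abs_of_pos hpos, abs_of_nonneg (arg_nonneg_iff.2 (him ▸ hpos.le))]
  have h1 : x * (z ^ (β : ℂ)).re ≤ 0 := mul_nonpos_of_nonpos_of_nonneg hx.le
    (re_cpow_pos (abs_le.2 ⟨by linarith, by linarith⟩) hzs).le
  have h2 : |y| * Real.sin (π / 2 * β) * (-x) ^ β ≤ y * (‖z‖ ^ β * Real.sin (arg z * β)) := by
    rw [mul_left_comm, hsign, mul_comm (‖z‖ ^ β)]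
    have hx0 : 0 ≤ -x := by linarith
    have hK : 0 ≤ |y| * Real.sin (|arg z| * β) := mul_nonneg (abs_nonneg y) (hsin0.trans hsin)
    gcongr
  change (z ^ (α : ℂ)).re ≤ _
  rw [cpow_eq_mul_cpow_sub_one (slitPlane_ne_zero hzs), mul_re, cpow_ofReal_im, hre, him]
  linarith

lemma surjective_rePowOnLine {α : ℝ} (hα : 1 < α) (hα' : α ≤ 3 / 2) {y : ℝ} (hy : y ≠ 0) :
    Surjective (rePowOnLine α y) := by
  have hc : 0 < Real.cos (π / 4) :=
    Real.cos_pos_of_mem_Ioo ⟨by linarith [Real.pi_pos], by linarith [Real.pi_pos]⟩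
  have hK : 0 < |y| * Real.sin (π / 2 * (α - 1)) :=
    mul_pos (abs_pos.2 hy) (Real.sin_pos_of_pos_of_lt_pi (by nlinarith [Real.pi_pos])
      (by nlinarith [Real.pi_pos]))
  refine Continuous.surjective (continuous_iff_continuousAt.2 fun x =>
    (hasDerivAt_rePowOnLine (ofReal_add_mul_I_mem_slitPlane.2 (Or.inr hy))).continuousAt) ?_ ?_
  · refine tendsto_atTop_mono' _ ?_
      (tendsto_atTop_add_const_right _ (-|y|) (tendsto_id.atTop_mul_const hc))
    filter_upwards [eventually_ge_atTop (max 1 (|y| / Real.cos (π / 4)))] with x hx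
    exact (rePowOnLine_ge hα.le hα' (le_of_max_le_left hx)
      ((div_le_iff₀ hc).1 (le_of_max_le_right hx))).trans' (by simp [sub_eq_add_neg])
  · refine tendsto_atBot_mono' _ ?_ (tendsto_neg_atTop_atBot.comp
      (((tendsto_rpow_atTop (sub_pos.2 hα)).comp tendsto_neg_atBot_atTop).const_mul_atTop hK))
    filter_upwards [eventually_lt_atBot 0] with x hx
    exact rePowOnLine_le hα.le hα' hx hy

def rePowMap (α : ℝ) (z : ℂ) : ℂ := ((z ^ (α : ℂ)).re : ℂ) + I * z.im

@[simp] lemma re_rePowMap (α : ℝ) (z : ℂ) : (rePowMap α z).re = (z ^ (α : ℂ)).re := by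
  simp [rePowMap]

@[simp] lemma im_rePowMap (α : ℝ) (z : ℂ) : (rePowMap α z).im = z.im := by
  simp [rePowMap]

lemma rePowMap_ofReal {α x : ℝ} (hx : 0 ≤ x) : rePowMap α x = ((x ^ α : ℝ) : ℂ) :=
  Complex.ext (by simp [← ofReal_cpow hx]) (by simp)

lemma harmonicMapOn_rePowMap (α : ℝ) : HarmonicMapOn (rePowMap α) slitPlane := by
  constructor
  · simpa using InnerProductSpace.HarmonicOnNhd.harmonicOnReal fun z hz =>
      (analyticAt_id.cpow analyticAt_const hz).harmonicAt_re (x := z)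
  · simpa using InnerProductSpace.HarmonicOnNhd.harmonicOnReal (Ω := slitPlane) fun z _ =>
      (analyticAt_id (z := z)).harmonicAt_im

def rePowMapDeriv (c : ℂ) : ℂ →L[ℝ] ℂ :=
  ofRealCLM.comp (reCLM.comp (c • ContinuousLinearMap.id ℝ ℂ)) + I • ofRealCLM.comp imCLM

@[simp] lemma rePowMapDeriv_apply (c v : ℂ) :
    rePowMapDeriv c v = ((c * v).re : ℂ) + I * v.im := by
  simp [rePowMapDeriv]

lemma hasStrictFDerivAt_rePowMap (α : ℝ) {z : ℂ} (hz : z ∈ slitPlane) :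
    HasStrictFDerivAt (rePowMap α) (rePowMapDeriv (α * z ^ ((α : ℂ) - 1))) z := by
  have hpow :=
    (hasStrictDerivAt_cpow_const (c := (α : ℂ)) hz).hasStrictFDerivAt.restrictScalars ℝ
  have := ((ofRealCLM.comp reCLM).hasStrictFDerivAt.comp z hpow).add
    (I • ofRealCLM.comp imCLM).hasStrictFDerivAt
  refine (this.congr_fderiv ?_).congr_of_eventuallyEq (.of_forall fun w => ?_)
  · ext v; simp [mul_comm]
  · simp [rePowMap]

lemma rePowMapDeriv_injective {c : ℂ} (hc : 0 < c.re) : Injective (rePowMapDeriv c) := by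
  refine (injective_iff_map_eq_zero _).2 fun v hv => ?_
  have him : v.im = 0 := by simpa using congrArg im hv
  have hre : c.re * v.re - c.im * v.im = 0 := by simpa using congrArg re hv
  rw [him, mul_zero, sub_zero, mul_eq_zero] at hre
  exact Complex.ext (hre.resolve_left hc.ne') him

lemma injOn_rePowMap {α : ℝ} (hα : 1 / 2 ≤ α) (hα' : α ≤ 3 / 2) :
    InjOn (rePowMap α) slitPlane := by
  intro z hz w hw hzw
  have him : z.im = w.im := by simpa using congrArg im hzw
  have hre : rePowOnLine α z.im z.re = rePowOnLine α z.im w.re := by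
    rw [rePowOnLine_im_re, him, rePowOnLine_im_re]
    simpa using congrArg re hzw
  refine Complex.ext ((strictMonoOn_rePowOnLine hα hα' z.im).injOn ?_ ?_ hre) him
  · simpa only [mem_ofPred_eq, re_add_im] using hz
  · simpa only [mem_ofPred_eq, him, re_add_im] using hw

lemma mapsTo_rePowMap (α : ℝ) : MapsTo (rePowMap α) slitPlane slitPlane := by
  intro z hz
  rcases eq_or_ne z.im 0 with him | him
  · have hre : 0 < z.re := (mem_slitPlane_iff.1 hz).resolve_right (not_not.2 him)
    rw [← re_add_im z, him, ofReal_zero, zero_mul, add_zero, rePowMap_ofReal hre.le,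
      ofReal_mem_slitPlane]
    exact Real.rpow_pos_of_pos hre α
  · exact mem_slitPlane_iff.2 (Or.inr (by simpa using him))

lemma surjOn_rePowMap {α : ℝ} (hα : 1 < α) (hα' : α ≤ 3 / 2) :
    SurjOn (rePowMap α) slitPlane slitPlane := by
  intro w hw
  rcases eq_or_ne w.im 0 with him | him
  · have hre : 0 < w.re := (mem_slitPlane_iff.1 hw).resolve_right (not_not.2 him)
    refine ⟨(w.re ^ α⁻¹ : ℝ), ofReal_mem_slitPlane.2 (Real.rpow_pos_of_pos hre _), ?_⟩
    rw [rePowMap_ofReal (Real.rpow_nonneg hre.le _), Real.rpow_inv_rpow hre.le (by linarith),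
      ← re_add_im w, him]
    simp
  · obtain ⟨x, hx⟩ := surjective_rePowOnLine hα hα' him w.re
    refine ⟨x + w.im * I, ofReal_add_mul_I_mem_slitPlane.2 (Or.inr him), Complex.ext ?_ ?_⟩
    · simpa [rePowOnLine] using hx
    · simp

lemma bijOn_rePowMap {α : ℝ} (hα : 1 < α) (hα' : α ≤ 3 / 2) :
    BijOn (rePowMap α) slitPlane slitPlane :=
  ⟨mapsTo_rePowMap α, injOn_rePowMap (by linarith) hα', surjOn_rePowMap hα hα'⟩

lemma continuousOn_rePowMap (α : ℝ) : ContinuousOn (rePowMap α) slitPlane := fun _ hz =>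
  (hasStrictFDerivAt_rePowMap α hz).continuousAt.continuousWithinAt

lemma continuousOn_invFunOn_rePowMap {α : ℝ} (hα : 1 < α) (hα' : α ≤ 3 / 2) :
    ContinuousOn (invFunOn (rePowMap α) slitPlane) slitPlane := by
  intro w hw
  obtain ⟨z, hz, rfl⟩ := surjOn_rePowMap hα hα' hw
  exact ((hasStrictFDerivAt_rePowMap α hz).continuousAt_invFunOn
    (rePowMapDeriv_injective (re_mul_cpow_sub_one_pos (by linarith) hα' hz))
    (isOpen_slitPlane.mem_nhds hz) (injOn_rePowMap (by linarith) hα')).continuousWithinAt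

lemma rePowMap_image_ofReal_Icc {α a b : ℝ} (hα : 0 ≤ α) (ha : 0 ≤ a) (hab : a ≤ b) :
    rePowMap α '' (ofReal '' Icc a b) = ofReal '' Icc (a ^ α) (b ^ α) := by
  rw [image_image, image_congr fun x hx => rePowMap_ofReal (ha.trans hx.1),
    ← image_image ofReal (· ^ α), ContinuousOn.image_Icc_of_monotoneOn hab
      (fun x _ => (Real.continuousAt_rpow_const x α (Or.inr hα)).continuousWithinAt)
      ((Real.monotoneOn_rpow_Ici_of_exponent_nonneg hα).mono fun x hx => ha.trans hx.1)]

/-- The map `h(z) = Re(z^α) + i Im z` is a harmonic homeomorphism of the slit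
plane `G = ℂ \ (-∞,0]` onto itself mapping `G \ [s,s+1]` onto `G \ [s^α,(s+1)^α]`. -/
theorem stmt10 (α : ℝ) (hα1 : 1 < α) (hα2 : α ≤ 3/2)
    (h : ℂ → ℂ)
    (hh : ∀ z : ℂ, h z = (((z ^ (α : ℂ)).re : ℂ)) + Complex.I * (z.im : ℂ)) :
    HarmonicMapOn h ((Complex.ofReal '' Set.Iic 0)ᶜ) ∧
    ContinuousOn h ((Complex.ofReal '' Set.Iic 0)ᶜ) ∧
    Set.BijOn h ((Complex.ofReal '' Set.Iic 0)ᶜ) ((Complex.ofReal '' Set.Iic 0)ᶜ) ∧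
    (∃ g : ℂ → ℂ, ContinuousOn g ((Complex.ofReal '' Set.Iic 0)ᶜ) ∧
      ∀ z ∈ ((Complex.ofReal '' Set.Iic 0)ᶜ : Set ℂ), g (h z) = z) ∧
    ∀ s : ℝ, 0 < s →
      h '' ((Complex.ofReal '' Set.Iic 0)ᶜ \ Complex.ofReal '' Set.Icc s (s + 1)) =
        (Complex.ofReal '' Set.Iic 0)ᶜ \ Complex.ofReal '' Set.Icc (s ^ α) ((s + 1) ^ α) := by
  obtain rfl : h = rePowMap α := funext hh
  rw [compl_image_ofReal_Iic_zero]
  have hbij := bijOn_rePowMap hα1 hα2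
  refine ⟨harmonicMapOn_rePowMap α, continuousOn_rePowMap α, hbij,
    ⟨_, continuousOn_invFunOn_rePowMap hα1 hα2, fun z hz => hbij.injOn.leftInvOn_invFunOn hz⟩,
    fun s hs => ?_⟩
  have hseg : ofReal '' Icc s (s + 1) ⊆ slitPlane := by
    rintro _ ⟨x, hx, rfl⟩
    exact ofReal_mem_slitPlane.2 (hs.trans_le hx.1)
  rw [hbij.injOn.image_sdiff, hbij.image_eq, inter_eq_self_of_subset_right hseg,
    rePowMap_image_ofReal_Icc (by linarith) hs.le (by linarith)]
end
end

section
/- Let Ω ⊆ ℂ be open, let h : Ω → ℂ be real-differentiable, let ν : Ω → ℂ satisfy |ν(z)| < 1 for all z ∈ Ω, and suppose h satisfies the second Beltrami equation h_{z̄}(z) = ν(z)·conj(h_z(z)) on Ω. Then for every κ ∈ ℂ with |κ| < 1, the map H(z) = h(z) − κ·conj(h(z)) satisfies H_{z̄}(z) = ((ν(z) − κ)/(1 − conj(κ)ν(z)))·conj(H_z(z)) for all z ∈ Ω. -/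
noncomputable section

/-!
Conjugation swaps the two Wirtinger derivatives: `(h̄)_z = conj h_z̄` and `(h̄)_z̄ = conj h_z`.
Hence for `H = h - κ h̄` the Beltrami equation `h_z̄ = ν conj h_z` gives
`H_z̄ = (ν - κ) conj h_z` and `conj H_z = (1 - κ̄ ν) conj h_z`, and `1 - κ̄ ν ≠ 0`
because `|κ| < 1` and `|ν| < 1`.
-/

open ComplexConjugate

lemma fderiv_conj_apply (f : ℂ → ℂ) (z v : ℂ) :
    fderiv ℝ (fun w => conj (f w)) z v = conj (fderiv ℝ f z v) :=
  DFunLike.congr_fun (fderiv_star (f := f) (x := z)) v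

lemma wirtingerZ_conj (f : ℂ → ℂ) (z : ℂ) :
    wirtingerZ (fun w => conj (f w)) z = conj (wirtingerZbar f z) := by
  simp only [wirtingerZ, wirtingerZbar, fderiv_conj_apply, map_div₀, map_add, map_mul,
    Complex.conj_I, map_ofNat]
  ring

lemma wirtingerZbar_conj (f : ℂ → ℂ) (z : ℂ) :
    wirtingerZbar (fun w => conj (f w)) z = conj (wirtingerZ f z) := by
  simp only [wirtingerZ, wirtingerZbar, fderiv_conj_apply, map_div₀, map_sub, map_mul,
    Complex.conj_I, map_ofNat]
  ring

section Linearity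

variable {f g : ℂ → ℂ} {z : ℂ}

lemma wirtingerZ_sub (hf : DifferentiableAt ℝ f z) (hg : DifferentiableAt ℝ g z) :
    wirtingerZ (fun w => f w - g w) z = wirtingerZ f z - wirtingerZ g z := by
  simp only [wirtingerZ, fderiv_fun_sub hf hg, sub_apply]
  ring

lemma wirtingerZbar_sub (hf : DifferentiableAt ℝ f z) (hg : DifferentiableAt ℝ g z) :
    wirtingerZbar (fun w => f w - g w) z = wirtingerZbar f z - wirtingerZbar g z := by
  simp only [wirtingerZbar, fderiv_fun_sub hf hg, sub_apply]
  ring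

lemma wirtingerZ_const_mul (c : ℂ) (hf : DifferentiableAt ℝ f z) :
    wirtingerZ (fun w => c * f w) z = c * wirtingerZ f z := by
  simp only [wirtingerZ, fderiv_const_mul hf c, smul_apply, smul_eq_mul]
  ring

lemma wirtingerZbar_const_mul (c : ℂ) (hf : DifferentiableAt ℝ f z) :
    wirtingerZbar (fun w => c * f w) z = c * wirtingerZbar f z := by
  simp only [wirtingerZbar, fderiv_const_mul hf c, smul_apply, smul_eq_mul]
  ring

lemma wirtingerZ_sub_const_mul_conj (κ : ℂ) (hf : DifferentiableAt ℝ f z) :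
    wirtingerZ (fun w => f w - κ * conj (f w)) z =
      wirtingerZ f z - κ * conj (wirtingerZbar f z) := by
  have hconj : DifferentiableAt ℝ (fun w => conj (f w)) z := hf.star
  rw [wirtingerZ_sub hf (hconj.const_mul κ), wirtingerZ_const_mul κ hconj, wirtingerZ_conj]

lemma wirtingerZbar_sub_const_mul_conj (κ : ℂ) (hf : DifferentiableAt ℝ f z) :
    wirtingerZbar (fun w => f w - κ * conj (f w)) z =
      wirtingerZbar f z - κ * conj (wirtingerZ f z) := by
  have hconj : DifferentiableAt ℝ (fun w => conj (f w)) z := hf.star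
  rw [wirtingerZbar_sub hf (hconj.const_mul κ), wirtingerZbar_const_mul κ hconj,
    wirtingerZbar_conj]

end Linearity

lemma one_sub_conj_mul_ne_zero {κ ν : ℂ} (hκ : ‖κ‖ ≤ 1) (hν : ‖ν‖ < 1) :
    1 - conj κ * ν ≠ 0 := by
  have : ‖conj κ * ν‖ < 1 := by
    rw [norm_mul, Complex.norm_conj]
    exact mul_lt_one_of_nonneg_of_lt_one_right hκ (norm_nonneg _) hν
  intro h
  rw [← sub_eq_zero.mp h, norm_one] at this
  exact this.false

theorem stmt11_general (Ω : Set ℂ) (h : ℂ → ℂ)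
    (hdiff : ∀ z ∈ Ω, DifferentiableAt ℝ h z)
    (ν : ℂ → ℂ) (hν : ∀ z ∈ Ω, ‖ν z‖ < 1)
    (hbel : ∀ z ∈ Ω, wirtingerZbar h z = ν z * (starRingEnd ℂ) (wirtingerZ h z))
    (κ : ℂ) (hκ : ‖κ‖ < 1) :
    ∀ z ∈ Ω, wirtingerZbar (fun w => h w - κ * (starRingEnd ℂ) (h w)) z =
      ((ν z - κ) / (1 - (starRingEnd ℂ) κ * ν z)) *
        (starRingEnd ℂ) (wirtingerZ (fun w => h w - κ * (starRingEnd ℂ) (h w)) z) := by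
  intro z hz
  have hden := one_sub_conj_mul_ne_zero hκ.le (hν z hz)
  rw [wirtingerZbar_sub_const_mul_conj κ (hdiff z hz),
    wirtingerZ_sub_const_mul_conj κ (hdiff z hz), hbel z hz]
  simp only [map_sub, map_mul, Complex.conj_conj]
  rw [div_mul_eq_mul_div, eq_div_iff hden]
  ring

/-- Affine change of the target transforms the second Beltrami coefficient by
a Möbius transformation. -/
theorem stmt11 (Ω : Set ℂ) (hΩ : IsOpen Ω) (h : ℂ → ℂ)
    (hdiff : ∀ z ∈ Ω, DifferentiableAt ℝ h z)
    (ν : ℂ → ℂ) (hν : ∀ z ∈ Ω, ‖ν z‖ < 1)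
    (hbel : ∀ z ∈ Ω, wirtingerZbar h z = ν z * (starRingEnd ℂ) (wirtingerZ h z))
    (κ : ℂ) (hκ : ‖κ‖ < 1) :
    ∀ z ∈ Ω, wirtingerZbar (fun w => h w - κ * (starRingEnd ℂ) (h w)) z =
      ((ν z - κ) / (1 - (starRingEnd ℂ) κ * ν z)) *
        (starRingEnd ℂ) (wirtingerZ (fun w => h w - κ * (starRingEnd ℂ) (h w)) z) :=
  stmt11_general Ω h hdiff ν hν hbel κ hκ
end
end

section
/- Define λ(t) = sup over α ∈ (0,1) of α·(t^{1−α} − 1)/(t^{1−α} + 1) for t ≥ 1. Then: (i) for every t > 1, λ(t) ≥ (log t − log(1 + log t))/(2 + log t); and (ii) λ(t) → 1 as t → ∞. -/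
noncomputable section

open Real Filter Topology Set

def lamSet (t : ℝ) : Set ℝ :=
  {y : ℝ | ∃ α ∈ Ioo (0 : ℝ) 1, y = α * (t ^ (1 - α) - 1) / (t ^ (1 - α) + 1)}

theorem mul_sub_one_div_add_one_le_one {a x : ℝ} (ha : a ≤ 1) (hx : 1 ≤ x) :
    a * (x - 1) / (x + 1) ≤ 1 := by
  rw [div_le_one (by linarith)]
  nlinarith

theorem lamSet_le_one {t : ℝ} (ht : 1 ≤ t) : ∀ y ∈ lamSet t, y ≤ 1 := by
  rintro y ⟨α, ⟨-, hα1⟩, rfl⟩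
  exact mul_sub_one_div_add_one_le_one hα1.le (one_le_rpow ht (by linarith))

/-- The bound of (i) is the value at `α = 1 - log (1 + log t) / log t`, for which
`t ^ (1 - α) = 1 + log t`. -/
theorem log_sub_log_one_add_log_div_mem_lamSet {t : ℝ} (ht : 1 < t) :
    (log t - log (1 + log t)) / (2 + log t) ∈ lamSet t := by
  have hL : 0 < log t := log_pos ht
  have hlog_lt : log (1 + log t) < log t := by
    simpa using log_lt_sub_one_of_pos (by positivity : 0 < 1 + log t) (by linarith)
  have hb_pos : 0 < logb t (1 + log t) := logb_pos ht (by linarith)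
  have hb_lt : logb t (1 + log t) < 1 := by
    rwa [logb, div_lt_one hL]
  refine ⟨1 - logb t (1 + log t), ⟨by linarith, by linarith⟩, ?_⟩
  rw [sub_sub_cancel, rpow_logb (by linarith) ht.ne' (by positivity), logb]
  field_simp
  ring

theorem tendsto_sub_log_one_add_div_two_add :
    Tendsto (fun L : ℝ => (L - log (1 + L)) / (2 + L)) atTop (𝓝 1) := by
  have hlog : Tendsto (fun L : ℝ => log (1 + L) / (2 + L)) atTop (𝓝 0) := by
    refine ((tendsto_pow_log_div_mul_add_atTop 1 1 1 one_ne_zero).comp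
      (tendsto_atTop_add_const_left atTop 1 tendsto_id)).congr fun L => ?_
    simp only [Function.comp, id, pow_one, one_mul]
    ring_nf
  have hinv : Tendsto (fun L : ℝ => 2 / (2 + L)) atTop (𝓝 0) :=
    tendsto_const_nhds.div_atTop (tendsto_atTop_add_const_left atTop 2 tendsto_id)
  have h := (hinv.add hlog).const_sub 1
  rw [add_zero, sub_zero] at h
  refine h.congr' ?_
  filter_upwards [eventually_gt_atTop 0] with L hL
  field_simp
  ring

/-- Properties of the function `λ(t) = sup_{0<α<1} α (t^{1-α}-1)/(t^{1-α}+1)`. -/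
theorem stmt14 (lam : ℝ → ℝ)
    (hlam : ∀ t : ℝ, 1 ≤ t → lam t =
      sSup {y : ℝ | ∃ α ∈ Set.Ioo (0 : ℝ) 1, y = α * (t ^ (1 - α) - 1) / (t ^ (1 - α) + 1)}) :
    (∀ t : ℝ, 1 < t →
      (Real.log t - Real.log (1 + Real.log t)) / (2 + Real.log t) ≤ lam t) ∧
    Filter.Tendsto lam Filter.atTop (nhds 1) := by
  have hlow : ∀ t : ℝ, 1 < t →
      (Real.log t - Real.log (1 + Real.log t)) / (2 + Real.log t) ≤ lam t := fun t ht => by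
    rw [hlam t ht.le]
    exact le_csSup ⟨1, lamSet_le_one ht.le⟩ (log_sub_log_one_add_log_div_mem_lamSet ht)
  have hup : ∀ t : ℝ, 1 ≤ t → lam t ≤ 1 := fun t ht => by
    rw [hlam t ht]
    exact Real.sSup_le (lamSet_le_one ht) zero_le_one
  refine ⟨hlow, tendsto_of_tendsto_of_tendsto_of_le_of_le'
    (tendsto_sub_log_one_add_div_two_add.comp tendsto_log_atTop) tendsto_const_nhds ?_ ?_⟩
  · filter_upwards [eventually_gt_atTop 1] with t ht using hlow t ht
  · filter_upwards [eventually_ge_atTop 1] with t ht using hup t ht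
end
end
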